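/- Let G_1 and G_2 be graphs, let P_1 ∈ V(G_1) and P_2 ∈ V(G_2), let G be the vertex gluing of G_1 and G_2 at P_1 and P_2, and let P ∈ V(G) be the identified vertex. For all n, k ∈ ℕ, the following are equivalent: (1) |nP − E| ≠ ∅ for every effective divisor E on G of degree k; (2) n ≥ λ_{P_1}^{G_1}(k_1) + λ_{P_2}^{G_2}(k_2) for all k_1, k_2 ∈ ℕ with k_1 + k_2 = k, where λ_Q(k) = min{ m ∈ ℕ : r(mQ) = k }. -/

import Mathlib

open scoped Classical

/-- A graph: a finite connected multigraph with no loop edges, given by a symmetric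
edge-multiplicity function on a finite nonempty vertex type. -/
structure Multigraph where
  V : Type
  [fintypeV : Fintype V]
  [decEqV : DecidableEq V]
  [nonemptyV : Nonempty V]
  adj : V → V → ℕ
  adj_symm : ∀ u v, adj u v = adj v u
  adj_loopless : ∀ v, adj v v = 0
  conn : ∀ u v, Relation.ReflTransGen (fun a b => adj a b ≠ 0) u v

attribute [instance] Multigraph.fintypeV Multigraph.decEqV Multigraph.nonemptyV

namespace Multigraph

variable (G : Multigraph)

/-- A simple graph: no multiple edges and more than one vertex. -/
def Simple : Prop :=
  (∀ u v, G.adj u v ≤ 1) ∧ 1 < Fintype.card G.V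

/-- The degree of a divisor. -/
def deg (D : G.V → ℤ) : ℤ := ∑ v, D v

/-- A divisor is effective if all its coefficients are nonnegative. -/
def Effective (D : G.V → ℤ) : Prop := ∀ v, 0 ≤ D v

/-- The Laplacian of an integer-valued function on the vertices. -/
def lap (f : G.V → ℤ) : G.V → ℤ := fun v => ∑ w, (G.adj v w : ℤ) * (f v - f w)

/-- The linear system `|D|` is nonempty, i.e. `D` is linearly equivalent to an
effective divisor. -/
def LinNonempty (D : G.V → ℤ) : Prop :=
  ∃ f : G.V → ℤ, G.Effective (D - G.lap f)

/-- The Baker–Norine rank of a divisor: `-1` if `|D| = ∅`, otherwise the maximal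
`k` such that `|D - E| ≠ ∅` for every effective divisor `E` of degree `k`. -/
noncomputable def rank (D : G.V → ℤ) : ℤ :=
  if G.LinNonempty D then
    ((sSup {k : ℕ | ∀ E : G.V → ℤ, G.Effective E → G.deg E = (k : ℤ) →
        G.LinNonempty (D - E)} : ℕ) : ℤ)
  else -1

/-- The divisor `n • P`. -/
def pt (P : G.V) (n : ℤ) : G.V → ℤ := fun v => if v = P then n else 0

/-- The rank Weierstrass set of `G` at `P`. -/
def Hr (P : G.V) : Set ℕ :=
  {n : ℕ | G.rank (G.pt P ((n : ℤ) - 1)) < G.rank (G.pt P (n : ℤ))}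

/-- The functional Weierstrass set of `G` at `P`: pole orders at `P` of functions
with a unique pole at `P`. -/
def Hf (P : G.V) : Set ℕ :=
  {n : ℕ | ∃ f : G.V → ℤ, G.lap f P = -(n : ℤ) ∧ ∀ Q, Q ≠ P → 0 ≤ G.lap f Q}

/-- The number of edges joining `Q` to vertices outside `A`. -/
def outdeg (A : Finset G.V) (Q : G.V) : ℕ := ∑ R ∈ Aᶜ, G.adj Q R

/-- A divisor is `P`-reduced. -/
def Reduced (P : G.V) (D : G.V → ℤ) : Prop :=
  (∀ Q, Q ≠ P → 0 ≤ D Q) ∧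
  ∀ A : Finset G.V, A.Nonempty → P ∉ A → ∃ Q ∈ A, D Q < (G.outdeg A Q : ℤ)

/-- `G` is the graph `B_n` with two vertices joined by `n` parallel edges. -/
def IsBanana (n : ℕ) : Prop :=
  Fintype.card G.V = 2 ∧ ∀ u v, u ≠ v → G.adj u v = n

/-- `G` is the complete graph on `n` vertices. -/
def IsComplete (n : ℕ) : Prop :=
  Fintype.card G.V = n ∧ ∀ u v, u ≠ v → G.adj u v = 1

/-- `G` is the complete bipartite graph with parts `A` (of size `m`) and its
complement (of size `n`). -/
def IsCompleteBipartite (A : Finset G.V) (m n : ℕ) : Prop :=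
  A.card = m ∧ Aᶜ.card = n ∧
  ∀ u v, G.adj u v = if (u ∈ A ∧ v ∉ A) ∨ (u ∉ A ∧ v ∈ A) then 1 else 0

/-- `λ_Q(k)`: the least `n` with `r(nQ) = k`. -/
noncomputable def lam (Q : G.V) (k : ℕ) : ℕ :=
  sInf {n : ℕ | G.rank (G.pt Q (n : ℤ)) = (k : ℤ)}

end Multigraph

/-- `G` is the vertex gluing of `G₁` and `G₂` identifying `P₁` and `P₂` into `P`. -/
def IsVertexGluing (G G₁ G₂ : Multigraph) (P : G.V) (P₁ : G₁.V) (P₂ : G₂.V) : Prop :=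
  ∃ (ι₁ : G₁.V → G.V) (ι₂ : G₂.V → G.V),
    Function.Injective ι₁ ∧ Function.Injective ι₂ ∧
    ι₁ P₁ = P ∧ ι₂ P₂ = P ∧
    (∀ a b, ι₁ a = ι₂ b → ι₁ a = P) ∧
    (∀ v : G.V, (∃ a, ι₁ a = v) ∨ (∃ b, ι₂ b = v)) ∧
    (∀ a b, G.adj (ι₁ a) (ι₁ b) = G₁.adj a b) ∧
    (∀ a b, G.adj (ι₂ a) (ι₂ b) = G₂.adj a b) ∧
    (∀ a b, ι₁ a ≠ P → ι₂ b ≠ P → G.adj (ι₁ a) (ι₂ b) = 0)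

/-!
A function on the vertex gluing `G` is a pair of functions on `G₁` and `G₂` agreeing at the glued
vertex, and as the Laplacian ignores additive constants this agreement costs nothing; the
Laplacian on `G` is then the two Laplacians side by side, added up at `P`. Hence, for `E` glued
from `E₁` and `E₂`, `|nP - E| ≠ ∅` iff `s₁ + s₂ ≤ n` for some `s₁, s₂` with `|s₁P₁ - E₁| ≠ ∅` and
`|s₂P₂ - E₂| ≠ ∅`. On a single graph, `|sQ - E| ≠ ∅` for all effective `E` of degree `k` iff
`s ≥ λ_Q(k)`, because `m ↦ r(mQ)` moves in steps of at most one. Choosing on each side an `Eᵢ`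
that fails at `λ_{Pᵢ}(kᵢ) - 1` gives one direction; splitting an arbitrary effective divisor on
`G` into its two sides gives the other.
-/

namespace Multigraph

def RankAtLeast (G : Multigraph) (D : G.V → ℤ) (k : ℕ) : Prop :=
  ∀ E : G.V → ℤ, G.Effective E → G.deg E = (k : ℤ) → G.LinNonempty (D - E)

variable {G : Multigraph} {D D' : G.V → ℤ} {k : ℕ}

@[simp] theorem pt_self (Q : G.V) (x : ℤ) : G.pt Q x Q = x := if_pos rfl

theorem pt_of_ne {Q v : G.V} (h : v ≠ Q) (x : ℤ) : G.pt Q x v = 0 := if_neg h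

theorem pt_add (Q : G.V) (x y : ℤ) : G.pt Q (x + y) = G.pt Q x + G.pt Q y := by
  funext v; by_cases h : v = Q <;> simp [pt, h]

theorem pt_mono (Q : G.V) : Monotone (G.pt Q) := fun x y hxy v => by
  by_cases h : v = Q <;> simp [pt, h, hxy]

theorem effective_pt (Q : G.V) {x : ℤ} (hx : 0 ≤ x) : G.Effective (G.pt Q x) := fun v => by
  by_cases h : v = Q <;> simp [pt, h, hx]

theorem deg_add (D D' : G.V → ℤ) : G.deg (D + D') = G.deg D + G.deg D' :=
  Finset.sum_add_distrib

theorem deg_sub (D D' : G.V → ℤ) : G.deg (D - D') = G.deg D - G.deg D' :=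
  Finset.sum_sub_distrib ..

@[simp] theorem deg_pt (Q : G.V) (x : ℤ) : G.deg (G.pt Q x) = x := by
  simp [deg, pt]

theorem deg_lap (f : G.V → ℤ) : G.deg (G.lap f) = 0 := by
  have hswap : ∑ v, ∑ w, (G.adj v w : ℤ) * f w = ∑ v, ∑ w, (G.adj v w : ℤ) * f v := by
    rw [Finset.sum_comm]
    simp_rw [G.adj_symm]
  simp only [deg, lap, mul_sub, Finset.sum_sub_distrib, hswap, sub_self]

theorem Effective.deg_nonneg (h : G.Effective D) : 0 ≤ G.deg D :=
  Finset.sum_nonneg fun v _ => h v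

theorem Effective.eq_zero_of_deg_eq_zero (h : G.Effective D) (h0 : G.deg D = 0) :
    D = 0 :=
  funext fun v => (Finset.sum_eq_zero_iff_of_nonneg fun w _ => h w).1 h0 v (Finset.mem_univ v)

theorem lap_add (f f' : G.V → ℤ) : G.lap (f + f') = G.lap f + G.lap f' := by
  funext v
  simp only [lap, Pi.add_apply, ← Finset.sum_add_distrib]
  exact Finset.sum_congr rfl fun w _ => by ring

theorem lap_add_const (f : G.V → ℤ) (c : ℤ) : G.lap (fun v => f v + c) = G.lap f := by
  funext v
  exact Finset.sum_congr rfl fun w _ => by ring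

theorem linNonempty_of_effective (h : G.Effective D) : G.LinNonempty D :=
  ⟨0, fun v => by simpa [lap] using h v⟩

theorem LinNonempty.mono (h : G.LinNonempty D) (hle : D ≤ D') :
    G.LinNonempty D' :=
  let ⟨f, hf⟩ := h
  ⟨f, fun v => (hf v).trans (sub_le_sub_right (hle v) _)⟩

theorem LinNonempty.add (h : G.LinNonempty D) (h' : G.LinNonempty D') :
    G.LinNonempty (D + D') := by
  obtain ⟨f, hf⟩ := h
  obtain ⟨f', hf'⟩ := h'
  refine ⟨f + f', fun v => ?_⟩
  have := add_nonneg (hf v) (hf' v)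
  simp only [Pi.sub_apply, Pi.add_apply, lap_add] at this ⊢
  linarith

theorem LinNonempty.deg_nonneg (h : G.LinNonempty D) : 0 ≤ G.deg D := by
  obtain ⟨f, hf⟩ := h
  simpa [deg_sub, deg_lap] using hf.deg_nonneg

/-- The witness fires `u` `m` times, sending `m` chips along each edge at `u`. -/
theorem linNonempty_pt_sub_pt_of_adj {u v : G.V} (h : G.adj u v ≠ 0) (m : ℕ) :
    G.LinNonempty (G.pt u ((∑ w, G.adj u w) * m : ℕ) - G.pt v m) := by
  have huv : u ≠ v := by rintro rfl; exact h (G.adj_loopless u)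
  refine ⟨G.pt u m, fun w => ?_⟩
  by_cases hwu : w = u
  · subst hwu
    have hlap : G.lap (G.pt w m) w = ∑ w', (G.adj w w' : ℤ) * m := by
      refine Finset.sum_congr rfl fun w' _ => ?_
      by_cases h' : w' = w
      · simp [h', G.adj_loopless]
      · simp [pt_of_ne h']
    simp [hlap, pt_of_ne huv, Finset.sum_mul]
  · have hlap : G.lap (G.pt u m) w = -((G.adj w u : ℤ) * m) := by
      simp [lap, pt, hwu]
    have hvu : (1 : ℤ) ≤ G.adj v u := by
      rw [G.adj_symm]; exact_mod_cast Nat.one_le_iff_ne_zero.2 h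
    by_cases hwv : w = v
    · subst hwv
      simp only [Pi.sub_apply, hlap, pt_of_ne hwu, pt_self]
      nlinarith
    · simp only [Pi.sub_apply, hlap, pt_of_ne hwu, pt_of_ne hwv]
      nlinarith

theorem exists_linNonempty_pt_sub_pt (u v : G.V) (m : ℕ) :
    ∃ c : ℕ, G.LinNonempty (G.pt u c - G.pt v m) := by
  induction G.conn u v generalizing m with
  | refl => exact ⟨m, by simpa using linNonempty_of_effective (G := G) (D := 0) fun _ => le_rfl⟩
  | @tail b w _ hbw ih =>
    obtain ⟨c, hc⟩ := ih ((∑ x, G.adj b x) * m)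
    exact ⟨c, by simpa using hc.add (linNonempty_pt_sub_pt_of_adj hbw m)⟩

theorem rankAtLeast_zero_iff : G.RankAtLeast D 0 ↔ G.LinNonempty D := by
  refine ⟨fun h => by simpa using h 0 (fun _ => le_rfl) (by simp [deg]), fun h E hE hdeg => ?_⟩
  rw [hE.eq_zero_of_deg_eq_zero (by exact_mod_cast hdeg), sub_zero]
  exact h

theorem RankAtLeast.mono (h : G.RankAtLeast D k) (hle : D ≤ D') : G.RankAtLeast D' k :=
  fun E hE hdeg => (h E hE hdeg).mono (sub_le_sub_right hle E)

theorem RankAtLeast.anti {j : ℕ} (h : G.RankAtLeast D k) (hjk : j ≤ k) : G.RankAtLeast D j := by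
  intro E hE hdeg
  obtain ⟨v⟩ := G.nonemptyV
  have hE' : G.Effective (E + G.pt v (k - j : ℕ)) :=
    fun w => add_nonneg (hE w) (effective_pt v (Nat.cast_nonneg _) w)
  refine (h _ hE' ?_).mono
    (sub_le_sub_left (le_add_of_nonneg_right (effective_pt v (Nat.cast_nonneg _))) D)
  rw [deg_add, hdeg, deg_pt]
  omega

theorem RankAtLeast.linNonempty (h : G.RankAtLeast D k) : G.LinNonempty D :=
  rankAtLeast_zero_iff.1 (h.anti k.zero_le)

theorem RankAtLeast.le_deg (h : G.RankAtLeast D k) : (k : ℤ) ≤ G.deg D := by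
  obtain ⟨v⟩ := G.nonemptyV
  have := (h _ (effective_pt v (Nat.cast_nonneg k)) (deg_pt v k)).deg_nonneg
  rw [deg_sub, deg_pt] at this
  omega

theorem natCast_le_rank_iff : (k : ℤ) ≤ G.rank D ↔ G.RankAtLeast D k := by
  by_cases hD : G.LinNonempty D
  · have hbdd : BddAbove {j : ℕ | G.RankAtLeast D j} :=
      ⟨(G.deg D).toNat, fun j hj => by have := hj.le_deg; omega⟩
    have hmem : sSup {j : ℕ | G.RankAtLeast D j} ∈ {j : ℕ | G.RankAtLeast D j} :=
      Nat.sSup_mem ⟨0, rankAtLeast_zero_iff.2 hD⟩ hbdd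
    rw [rank, if_pos hD, Nat.cast_le]
    exact ⟨fun hk => RankAtLeast.anti hmem hk, fun hk => le_csSup hbdd hk⟩
  · rw [rank, if_neg hD]
    exact iff_of_false (by omega) fun h => hD h.linNonempty

theorem RankAtLeast.of_add_pt {Q : G.V} (h : G.RankAtLeast (D + G.pt Q 1) (k + 1)) :
    G.RankAtLeast D k := by
  intro E hE hdeg
  have hE' : G.Effective (E + G.pt Q 1) :=
    fun w => add_nonneg (hE w) (effective_pt Q zero_le_one w)
  simpa using h _ hE' (by rw [deg_add, hdeg, deg_pt]; push_cast; rfl)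

theorem RankAtLeast.add_succ (h : G.RankAtLeast D k)
    (hD' : ∀ R, G.LinNonempty (D' - G.pt R 1)) : G.RankAtLeast (D + D') (k + 1) := by
  intro E hE hdeg
  obtain ⟨R, -, hR⟩ : ∃ R ∈ Finset.univ, (0 : ℤ) < E R :=
    Finset.exists_lt_of_sum_lt (by simp only [Finset.sum_const_zero]; change 0 < G.deg E; omega)
  have hE' : G.Effective (E - G.pt R 1) := fun w => by
    by_cases hw : w = R
    · subst hw; simp; omega
    · simpa [pt_of_ne hw] using hE w
  have := (h _ hE' (by rw [deg_sub, hdeg, deg_pt]; push_cast; ring)).add (hD' R)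
  convert this using 1
  abel

theorem exists_rankAtLeast_pt (Q : G.V) (k : ℕ) : ∃ n : ℕ, G.RankAtLeast (G.pt Q n) k := by
  choose c hc using fun R => exists_linNonempty_pt_sub_pt Q R 1
  have hC : ∀ R, G.LinNonempty (G.pt Q (∑ R, c R : ℕ) - G.pt R 1) := fun R =>
    (hc R).mono (by
      simpa using pt_mono Q (by exact_mod_cast Finset.single_le_sum (by simp) (Finset.mem_univ R)))
  refine ⟨(∑ R, c R) * k, ?_⟩
  induction k with
  | zero => simpa using rankAtLeast_zero_iff.2 (linNonempty_of_effective (effective_pt Q le_rfl))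
  | succ k ih =>
    convert ih.add_succ hC using 1
    rw [← pt_add]
    push_cast
    ring_nf

theorem rank_pt_eq_of_minimal {Q : G.V} {m : ℕ} (hm : G.RankAtLeast (G.pt Q m) k)
    (hmin : ∀ m' < m, ¬ G.RankAtLeast (G.pt Q m') k) : G.rank (G.pt Q m) = k := by
  refine le_antisymm ?_ (natCast_le_rank_iff.2 hm)
  by_contra! hlt
  have hsucc : G.RankAtLeast (G.pt Q m) (k + 1) := natCast_le_rank_iff.1 (by push_cast; omega)
  rcases m with _ | m
  · have := hsucc.le_deg
    rw [deg_pt] at this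
    omega
  · refine hmin m m.lt_succ_self (RankAtLeast.of_add_pt (Q := Q) ?_)
    rwa [← pt_add, ← Nat.cast_add_one]

theorem lam_le_iff (Q : G.V) (k n : ℕ) : G.lam Q k ≤ n ↔ G.RankAtLeast (G.pt Q n) k := by
  have hex := exists_rankAtLeast_pt Q k
  have hrank := rank_pt_eq_of_minimal (Nat.find_spec hex) fun _ => Nat.find_min hex
  have hlam : G.lam Q k = Nat.find hex := by
    have hmem : G.rank (G.pt Q (G.lam Q k)) = k :=
      Nat.sInf_mem (s := {n : ℕ | G.rank (G.pt Q n) = k}) ⟨_, hrank⟩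
    exact le_antisymm (Nat.sInf_le hrank) (Nat.find_min' hex (natCast_le_rank_iff.1 hmem.ge))
  rw [hlam, Nat.find_le_iff]
  exact ⟨fun ⟨m, hm, h⟩ => h.mono (pt_mono Q (by exact_mod_cast hm)), fun h => ⟨n, le_rfl, h⟩⟩

theorem rankAtLeast_pt_iff (Q : G.V) (k : ℕ) (s : ℤ) :
    G.RankAtLeast (G.pt Q s) k ↔ (G.lam Q k : ℤ) ≤ s := by
  rcases lt_or_ge s 0 with hs | hs
  · exact iff_of_false (fun h => by have := h.le_deg; rw [deg_pt] at this; omega) (by omega)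
  · lift s to ℕ using hs
    rw [Nat.cast_le, lam_le_iff]

theorem exists_effective_forall_lam_le (Q : G.V) (k : ℕ) :
    ∃ E, G.Effective E ∧ G.deg E = k ∧
      ∀ s : ℤ, G.LinNonempty (G.pt Q s - E) → (G.lam Q k : ℤ) ≤ s := by
  have hfail : ¬ G.RankAtLeast (G.pt Q (G.lam Q k - 1)) k := by
    rw [rankAtLeast_pt_iff]; omega
  simp only [RankAtLeast, not_forall] at hfail
  obtain ⟨E, hE, hdeg, hE'⟩ := hfail
  refine ⟨E, hE, hdeg, fun s hs => ?_⟩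
  by_contra! hlt
  exact hE' (hs.mono (sub_le_sub_right (pt_mono Q (by omega)) E))

theorem deg_extend_zero {H : Multigraph} {ι : H.V → G.V} (hι : Function.Injective ι)
    (D : H.V → ℤ) : G.deg (Function.extend ι D 0) = H.deg D :=
  (Fintype.sum_of_injective ι hι D _
    (fun v hv => Function.extend_apply' (f := ι) D (0 : G.V → ℤ) v hv)
    fun a => (hι.extend_apply D 0 a).symm).symm

structure VertexGluing (G G₁ G₂ : Multigraph) (P : G.V) (P₁ : G₁.V) (P₂ : G₂.V) where
  ι₁ : G₁.V → G.V
  ι₂ : G₂.V → G.V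
  injective₁ : Function.Injective ι₁
  injective₂ : Function.Injective ι₂
  ι₁_base : ι₁ P₁ = P
  ι₂_base : ι₂ P₂ = P
  eq_base_of_ι₁_eq_ι₂ : ∀ a b, ι₁ a = ι₂ b → ι₁ a = P
  ι₁_or_ι₂ : ∀ v : G.V, (∃ a, ι₁ a = v) ∨ (∃ b, ι₂ b = v)
  adj_ι₁ : ∀ a b, G.adj (ι₁ a) (ι₁ b) = G₁.adj a b
  adj_ι₂ : ∀ a b, G.adj (ι₂ a) (ι₂ b) = G₂.adj a b
  adj_ι₁_ι₂ : ∀ a b, ι₁ a ≠ P → ι₂ b ≠ P → G.adj (ι₁ a) (ι₂ b) = 0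

end Multigraph

theorem IsVertexGluing.nonempty {G G₁ G₂ : Multigraph} {P : G.V} {P₁ : G₁.V} {P₂ : G₂.V}
    (h : IsVertexGluing G G₁ G₂ P P₁ P₂) : Nonempty (G.VertexGluing G₁ G₂ P P₁ P₂) :=
  let ⟨ι₁, ι₂, h₁, h₂, h₃, h₄, h₅, h₆, h₇, h₈, h₉⟩ := h
  ⟨⟨ι₁, ι₂, h₁, h₂, h₃, h₄, h₅, h₆, h₇, h₈, h₉⟩⟩

namespace Multigraph.VertexGluing

variable {G G₁ G₂ : Multigraph} {P : G.V} {P₁ : G₁.V} {P₂ : G₂.V}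
  (g : G.VertexGluing G₁ G₂ P P₁ P₂)

def symm : G.VertexGluing G₂ G₁ P P₂ P₁ where
  ι₁ := g.ι₂
  ι₂ := g.ι₁
  injective₁ := g.injective₂
  injective₂ := g.injective₁
  ι₁_base := g.ι₂_base
  ι₂_base := g.ι₁_base
  eq_base_of_ι₁_eq_ι₂ b a h := h.trans (g.eq_base_of_ι₁_eq_ι₂ a b h.symm)
  ι₁_or_ι₂ v := (g.ι₁_or_ι₂ v).symm
  adj_ι₁ := g.adj_ι₂
  adj_ι₂ := g.adj_ι₁
  adj_ι₁_ι₂ b a hb ha := by rw [G.adj_symm]; exact g.adj_ι₁_ι₂ a b ha hb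

theorem ι₁_ne_base {a : G₁.V} (ha : a ≠ P₁) : g.ι₁ a ≠ P :=
  fun h => ha (g.injective₁ (h.trans g.ι₁_base.symm))

theorem not_exists_ι₂_eq_ι₁ {a : G₁.V} (ha : a ≠ P₁) : ¬ ∃ b, g.ι₂ b = g.ι₁ a :=
  fun ⟨b, hb⟩ => g.ι₁_ne_base ha (g.eq_base_of_ι₁_eq_ι₂ a b hb.symm)

theorem ι₂_ne_base {b : G₂.V} (hb : b ≠ P₂) : g.ι₂ b ≠ P :=
  g.symm.ι₁_ne_base hb

theorem not_exists_ι₁_eq_ι₂ {b : G₂.V} (hb : b ≠ P₂) : ¬ ∃ a, g.ι₁ a = g.ι₂ b :=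
  g.symm.not_exists_ι₂_eq_ι₁ hb

theorem forall_vertex_iff {p : G.V → Prop} :
    (∀ v, p v) ↔ p P ∧ (∀ a, a ≠ P₁ → p (g.ι₁ a)) ∧ ∀ b, b ≠ P₂ → p (g.ι₂ b) := by
  refine ⟨fun h => ⟨h P, fun a _ => h _, fun b _ => h _⟩, fun ⟨hP, h₁, h₂⟩ v => ?_⟩
  rcases g.ι₁_or_ι₂ v with ⟨a, rfl⟩ | ⟨b, rfl⟩
  · by_cases ha : a = P₁
    · rwa [ha, g.ι₁_base]
    · exact h₁ a ha
  · by_cases hb : b = P₂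
    · rwa [hb, g.ι₂_base]
    · exact h₂ b hb

theorem ext_vertex {α : Type*} {F F' : G.V → α} (hP : F P = F' P)
    (h₁ : ∀ a, a ≠ P₁ → F (g.ι₁ a) = F' (g.ι₁ a)) (h₂ : ∀ b, b ≠ P₂ → F (g.ι₂ b) = F' (g.ι₂ b)) :
    F = F' :=
  funext (g.forall_vertex_iff.2 ⟨hP, h₁, h₂⟩)

theorem sum_eq {M : Type*} [AddCommGroup M] (F : G.V → M) :
    ∑ v, F v = ∑ a, F (g.ι₁ a) + ∑ b, F (g.ι₂ b) - F P := by
  have hunion : Finset.univ.image g.ι₁ ∪ Finset.univ.image g.ι₂ = Finset.univ :=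
    Finset.eq_univ_of_forall fun v => by simpa using g.ι₁_or_ι₂ v
  have hinter : Finset.univ.image g.ι₁ ∩ Finset.univ.image g.ι₂ = {P} := by
    ext v
    simp only [Finset.mem_inter, Finset.mem_image, Finset.mem_univ, true_and,
      Finset.mem_singleton]
    refine ⟨fun ⟨⟨a, ha⟩, ⟨b, hb⟩⟩ => ha ▸ g.eq_base_of_ι₁_eq_ι₂ a b (ha.trans hb.symm),
      fun hv => ⟨⟨P₁, hv ▸ g.ι₁_base⟩, ⟨P₂, hv ▸ g.ι₂_base⟩⟩⟩
  rw [eq_sub_iff_add_eq, ← Finset.sum_singleton F P, ← hinter, ← hunion, Finset.sum_union_inter,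
    Finset.sum_image g.injective₁.injOn, Finset.sum_image g.injective₂.injOn]

theorem lap_ι₁ (f : G.V → ℤ) {a : G₁.V} (ha : a ≠ P₁) :
    G.lap f (g.ι₁ a) = G₁.lap (f ∘ g.ι₁) a := by
  refine (Fintype.sum_of_injective g.ι₁ g.injective₁ _ _ (fun v hv => ?_) fun a' => ?_).symm
  · obtain ⟨b, rfl⟩ := (g.ι₁_or_ι₂ v).resolve_left hv
    have hb : g.ι₂ b ≠ P := fun h => hv ⟨P₁, g.ι₁_base.trans h.symm⟩
    simp [g.adj_ι₁_ι₂ a b (g.ι₁_ne_base ha) hb]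
  · simp [g.adj_ι₁]

theorem lap_ι₂ (f : G.V → ℤ) {b : G₂.V} (hb : b ≠ P₂) :
    G.lap f (g.ι₂ b) = G₂.lap (f ∘ g.ι₂) b :=
  g.symm.lap_ι₁ f hb

theorem lap_base (f : G.V → ℤ) :
    G.lap f P = G₁.lap (f ∘ g.ι₁) P₁ + G₂.lap (f ∘ g.ι₂) P₂ := by
  rw [lap, g.sum_eq, sub_self, mul_zero, sub_zero]
  congr 1
  · simp only [lap, Function.comp_apply, ← g.adj_ι₁, g.ι₁_base]
  · simp only [lap, Function.comp_apply, ← g.adj_ι₂, g.ι₂_base]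

noncomputable def glueDiv (D₁ : G₁.V → ℤ) (D₂ : G₂.V → ℤ) : G.V → ℤ :=
  Function.extend g.ι₁ D₁ 0 + Function.extend g.ι₂ D₂ 0

variable {g}

theorem glueDiv_ι₁ (D₁ : G₁.V → ℤ) (D₂ : G₂.V → ℤ) {a : G₁.V} (ha : a ≠ P₁) :
    g.glueDiv D₁ D₂ (g.ι₁ a) = D₁ a := by
  simp [glueDiv, g.injective₁.extend_apply, Function.extend_apply' _ _ _ (g.not_exists_ι₂_eq_ι₁ ha)]

theorem symm_glueDiv (D₁ : G₁.V → ℤ) (D₂ : G₂.V → ℤ) :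
    g.symm.glueDiv D₂ D₁ = g.glueDiv D₁ D₂ :=
  add_comm _ _

theorem glueDiv_ι₂ (D₁ : G₁.V → ℤ) (D₂ : G₂.V → ℤ) {b : G₂.V} (hb : b ≠ P₂) :
    g.glueDiv D₁ D₂ (g.ι₂ b) = D₂ b := by
  rw [← symm_glueDiv]
  exact g.symm.glueDiv_ι₁ D₂ D₁ hb

theorem glueDiv_base (D₁ : G₁.V → ℤ) (D₂ : G₂.V → ℤ) : g.glueDiv D₁ D₂ P = D₁ P₁ + D₂ P₂ := by
  have h₁ := g.injective₁.extend_apply D₁ 0 P₁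
  have h₂ := g.injective₂.extend_apply D₂ 0 P₂
  rw [g.ι₁_base] at h₁
  rw [g.ι₂_base] at h₂
  rw [glueDiv, Pi.add_apply, h₁, h₂]

theorem lap_eq_glueDiv (f : G.V → ℤ) :
    G.lap f = g.glueDiv (G₁.lap (f ∘ g.ι₁)) (G₂.lap (f ∘ g.ι₂)) :=
  g.ext_vertex (by rw [glueDiv_base, g.lap_base])
    (fun a ha => by rw [glueDiv_ι₁ _ _ ha, g.lap_ι₁ f ha])
    (fun b hb => by rw [glueDiv_ι₂ _ _ hb, g.lap_ι₂ f hb])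

theorem glueDiv_sub (D₁ D₁' : G₁.V → ℤ) (D₂ D₂' : G₂.V → ℤ) :
    g.glueDiv (D₁ - D₁') (D₂ - D₂') = g.glueDiv D₁ D₂ - g.glueDiv D₁' D₂' :=
  g.ext_vertex (by simp only [Pi.sub_apply, glueDiv_base]; ring)
    (fun a ha => by simp only [Pi.sub_apply, glueDiv_ι₁ _ _ ha])
    (fun b hb => by simp only [Pi.sub_apply, glueDiv_ι₂ _ _ hb])

theorem glueDiv_pt (s₁ s₂ : ℤ) : g.glueDiv (G₁.pt P₁ s₁) (G₂.pt P₂ s₂) = G.pt P (s₁ + s₂) :=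
  g.ext_vertex (by simp [glueDiv_base])
    (fun a ha => by rw [glueDiv_ι₁ _ _ ha, pt_of_ne ha, pt_of_ne (g.ι₁_ne_base ha)])
    (fun b hb => by rw [glueDiv_ι₂ _ _ hb, pt_of_ne hb, pt_of_ne (g.ι₂_ne_base hb)])

theorem effective_glueDiv_iff {D₁ : G₁.V → ℤ} {D₂ : G₂.V → ℤ} :
    G.Effective (g.glueDiv D₁ D₂) ↔
      (∀ a, a ≠ P₁ → 0 ≤ D₁ a) ∧ (∀ b, b ≠ P₂ → 0 ≤ D₂ b) ∧ 0 ≤ D₁ P₁ + D₂ P₂ := by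
  rw [Effective, g.forall_vertex_iff, glueDiv_base]
  constructor
  · rintro ⟨hP, h₁, h₂⟩
    exact ⟨fun a ha => (h₁ a ha).trans_eq (glueDiv_ι₁ _ _ ha),
      fun b hb => (h₂ b hb).trans_eq (glueDiv_ι₂ _ _ hb), hP⟩
  · rintro ⟨h₁, h₂, hP⟩
    exact ⟨hP, fun a ha => (h₁ a ha).trans_eq (glueDiv_ι₁ _ _ ha).symm,
      fun b hb => (h₂ b hb).trans_eq (glueDiv_ι₂ _ _ hb).symm⟩

theorem effective_glueDiv {D₁ : G₁.V → ℤ} {D₂ : G₂.V → ℤ} (h₁ : G₁.Effective D₁)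
    (h₂ : G₂.Effective D₂) : G.Effective (g.glueDiv D₁ D₂) :=
  effective_glueDiv_iff.2 ⟨fun a _ => h₁ a, fun b _ => h₂ b, add_nonneg (h₁ P₁) (h₂ P₂)⟩

theorem deg_glueDiv (D₁ : G₁.V → ℤ) (D₂ : G₂.V → ℤ) :
    G.deg (g.glueDiv D₁ D₂) = G₁.deg D₁ + G₂.deg D₂ := by
  rw [glueDiv, deg_add, deg_extend_zero g.injective₁, deg_extend_zero g.injective₂]

theorem exists_glueDiv_eq {E : G.V → ℤ} (hE : G.Effective E) :
    ∃ E₁ E₂, G₁.Effective E₁ ∧ G₂.Effective E₂ ∧ g.glueDiv E₁ E₂ = E := by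
  refine ⟨E ∘ g.ι₁, Function.update (E ∘ g.ι₂) P₂ 0, fun a => hE _, fun b => ?_, ?_⟩
  · by_cases hb : b = P₂
    · simp [hb]
    · simpa [hb] using hE _
  · refine g.ext_vertex ?_ (fun a ha => glueDiv_ι₁ _ _ ha) (fun b hb => ?_)
    · simp [glueDiv_base, g.ι₁_base]
    · simp [glueDiv_ι₂ _ _ hb, hb]

variable (g)

theorem exists_comp_eq {α : Type*} {f₁ : G₁.V → α} {f₂ : G₂.V → α} (h : f₁ P₁ = f₂ P₂) :
    ∃ f : G.V → α, f ∘ g.ι₁ = f₁ ∧ f ∘ g.ι₂ = f₂ := by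
  refine ⟨Function.extend g.ι₁ f₁ (Function.extend g.ι₂ f₂ fun _ => f₁ P₁),
    Function.extend_comp g.injective₁ _ _, funext fun b => ?_⟩
  by_cases hb : b = P₂
  · subst hb
    rw [Function.comp_apply, ← h, ← g.ι₁_base.trans g.ι₂_base.symm, g.injective₁.extend_apply]
  · rw [Function.comp_apply, Function.extend_apply' _ _ _ (g.not_exists_ι₁_eq_ι₂ hb),
      g.injective₂.extend_apply]

theorem exists_lap_eq_glueDiv (f₁ : G₁.V → ℤ) (f₂ : G₂.V → ℤ) :
    ∃ f : G.V → ℤ, G.lap f = g.glueDiv (G₁.lap f₁) (G₂.lap f₂) := by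
  obtain ⟨f, hf₁, hf₂⟩ :=
    g.exists_comp_eq (f₁ := fun a => f₁ a + (f₂ P₂ - f₁ P₁)) (f₂ := f₂) (by ring)
  exact ⟨f, by rw [g.lap_eq_glueDiv, hf₁, hf₂, lap_add_const]⟩

theorem linNonempty_pt_sub_glueDiv_iff (n : ℤ) (E₁ : G₁.V → ℤ) (E₂ : G₂.V → ℤ) :
    G.LinNonempty (G.pt P n - g.glueDiv E₁ E₂) ↔
      ∃ s₁ s₂ : ℤ, s₁ + s₂ ≤ n ∧ G₁.LinNonempty (G₁.pt P₁ s₁ - E₁) ∧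
        G₂.LinNonempty (G₂.pt P₂ s₂ - E₂) := by
  constructor
  · rintro ⟨f, hf⟩
    -- `s₁` makes the `G₁`-part vanish at `P₁`, so the `G₂`-part carries the whole value at `P`.
    set s₁ := E₁ P₁ + G₁.lap (f ∘ g.ι₁) P₁
    rw [g.lap_eq_glueDiv, ← add_sub_cancel s₁ n, ← glueDiv_pt, ← glueDiv_sub, ← glueDiv_sub,
      effective_glueDiv_iff] at hf
    obtain ⟨h₁, h₂, hP⟩ := hf
    have hP₁ : (G₁.pt P₁ s₁ - E₁ - G₁.lap (f ∘ g.ι₁)) P₁ = 0 := by simp [s₁]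
    refine ⟨s₁, n - s₁, by simp, ⟨f ∘ g.ι₁, fun a => ?_⟩, ⟨f ∘ g.ι₂, fun b => ?_⟩⟩
    · by_cases ha : a = P₁
      · exact ha ▸ hP₁.ge
      · exact h₁ a ha
    · by_cases hb : b = P₂
      · subst hb
        linarith
      · exact h₂ b hb
  · rintro ⟨s₁, s₂, hs, ⟨f₁, hf₁⟩, ⟨f₂, hf₂⟩⟩
    obtain ⟨f, hf⟩ := g.exists_lap_eq_glueDiv f₁ f₂
    refine LinNonempty.mono ⟨f, ?_⟩ (sub_le_sub_right (pt_mono P hs) _)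
    rw [hf, ← glueDiv_pt, ← glueDiv_sub, ← glueDiv_sub]
    exact effective_glueDiv hf₁ hf₂

end Multigraph.VertexGluing

/-- In a vertex gluing, `|nP - E| ≠ ∅` for every effective divisor `E` of degree
`k` iff `n ≥ λ_{P₁}(k₁) + λ_{P₂}(k₂)` for all decompositions `k₁ + k₂ = k`. -/
theorem linNonempty_iff_lam (G G₁ G₂ : Multigraph) (P : G.V) (P₁ : G₁.V) (P₂ : G₂.V)
    (h : IsVertexGluing G G₁ G₂ P P₁ P₂) (n k : ℕ) :
    (∀ E : G.V → ℤ, G.Effective E → G.deg E = (k : ℤ) →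
        G.LinNonempty (G.pt P (n : ℤ) - E)) ↔
      (∀ k₁ k₂ : ℕ, k₁ + k₂ = k → G₁.lam P₁ k₁ + G₂.lam P₂ k₂ ≤ n) := by
  obtain ⟨g⟩ := h.nonempty
  constructor
  · intro hN k₁ k₂ hk
    obtain ⟨E₁, hE₁, hdeg₁, hlam₁⟩ := Multigraph.exists_effective_forall_lam_le P₁ k₁
    obtain ⟨E₂, hE₂, hdeg₂, hlam₂⟩ := Multigraph.exists_effective_forall_lam_le P₂ k₂
    have hdeg : G.deg (g.glueDiv E₁ E₂) = k := by
      rw [Multigraph.VertexGluing.deg_glueDiv, hdeg₁, hdeg₂, ← hk, Nat.cast_add]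
    obtain ⟨s₁, s₂, hs, h₁, h₂⟩ := (g.linNonempty_pt_sub_glueDiv_iff n E₁ E₂).1
      (hN _ (Multigraph.VertexGluing.effective_glueDiv hE₁ hE₂) hdeg)
    have := hlam₁ s₁ h₁
    have := hlam₂ s₂ h₂
    omega
  · intro hlam E hE hdeg
    obtain ⟨E₁, E₂, hE₁, hE₂, rfl⟩ := g.exists_glueDiv_eq hE
    lift G₁.deg E₁ to ℕ using hE₁.deg_nonneg with k₁ hk₁
    lift G₂.deg E₂ to ℕ using hE₂.deg_nonneg with k₂ hk₂
    rw [Multigraph.VertexGluing.deg_glueDiv, ← hk₁, ← hk₂] at hdeg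
    refine (g.linNonempty_pt_sub_glueDiv_iff n E₁ E₂).2 ⟨_, _, ?_,
      (Multigraph.rankAtLeast_pt_iff P₁ k₁ _).2 le_rfl E₁ hE₁ hk₁.symm,
      (Multigraph.rankAtLeast_pt_iff P₂ k₂ _).2 le_rfl E₂ hE₂ hk₂.symm⟩
    exact_mod_cast hlam k₁ k₂ (by exact_mod_cast hdeg)
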